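/- arXiv:math/0508159 — 5 statements merged into one kernel-verified Lean document; each statement's English description precedes it below -/
import Mathlib

section
/- Let p be a prime, n a positive integer, r an integer, and j a non-negative integer. Then the sum over all integers k with 0 ≤ k ≤ n and k ≡ r (mod p) of (-1)^(n-k) · C(n,k) · C((k-r)/p, j) is divisible by p^[(n-1-jp)/(p-1)]. -/
open Polynomial Finset fwdDiff fwdDiff_aux

private def gfun (p j : ℕ) : ℤ → ℤ :=
  fun x => if (p:ℤ) ∣ x then Ring.choose (x / (p:ℤ)) j else 0

private lemma gfun_shift (p : ℕ) (hp : (p:ℤ) ≠ 0) (j : ℕ) (x : ℤ) :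
    gfun p (j+1) (x + (p:ℤ)) - gfun p (j+1) x = gfun p j x := by
  unfold gfun
  by_cases hd : (p:ℤ) ∣ x
  · have h1 : (p:ℤ) ∣ x + p := dvd_add hd dvd_rfl
    rw [if_pos h1, if_pos hd, if_pos hd]
    have hdiv : (x + p)/(p:ℤ) = x/(p:ℤ) + 1 := by
      obtain ⟨c, rfl⟩ := hd
      rw [Int.mul_ediv_cancel_left _ hp, show (p:ℤ)*c + p = (p:ℤ)*(c+1) by ring,
        Int.mul_ediv_cancel_left _ hp]
    rw [hdiv, Ring.choose_succ_succ]
    ring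
  · have h1 : ¬ (p:ℤ) ∣ x + p := by
      intro h; exact hd (by simpa using h.sub (dvd_refl (p:ℤ)))
    rw [if_neg h1, if_neg hd, if_neg hd]
    ring

private lemma gfun_shift_zero (p : ℕ) (x : ℤ) :
    gfun p 0 (x + (p:ℤ)) - gfun p 0 x = 0 := by
  unfold gfun
  by_cases hd : (p:ℤ) ∣ x
  · rw [if_pos (dvd_add hd dvd_rfl), if_pos hd, Ring.choose_zero_right,
      Ring.choose_zero_right, sub_self]
  · have h1 : ¬ (p:ℤ) ∣ x + p := by
      intro h; exact hd (by simpa using h.sub (dvd_refl (p:ℤ)))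
    rw [if_neg h1, if_neg hd, sub_self]

private noncomputable def Phi : Polynomial ℤ →ₐ[ℤ] Module.End ℤ (ℤ → ℤ) :=
  Polynomial.aeval (fwdDiff_aux.shiftₗ ℤ ℤ (1:ℤ))

private lemma Phi_pow_X_sub_one (k : ℕ) (f : ℤ → ℤ) :
    Phi ((X - 1)^k) f = (fwdDiff (1:ℤ))^[k] f := by
  have h1 : Phi (X - 1) = fwdDiffₗ ℤ ℤ (1:ℤ) := by
    rw [Phi, map_sub, aeval_X, map_one, shiftₗ]
    exact add_sub_cancel_right _ _
  rw [map_pow, h1, coe_fwdDiffₗ_pow]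

private lemma Phi_dvd (d : ℤ) (q : Polynomial ℤ) (f : ℤ → ℤ) (hf : ∀ x, d ∣ f x) (y : ℤ) :
    d ∣ Phi q f y := by
  induction q using Polynomial.induction_on' with
  | add a b ha hb =>
    rw [map_add, LinearMap.add_apply, Pi.add_apply]
    exact dvd_add ha hb
  | monomial i a =>
    rw [Phi, aeval_monomial, Algebra.algebraMap_eq_smul_one, Module.End.mul_apply,
      LinearMap.smul_apply, Module.End.one_apply, Pi.smul_apply, smul_eq_mul,
      shiftₗ_pow_apply]
    exact Dvd.dvd.mul_left (hf _) a

private lemma key_decomp (p : ℕ) (hp : p.Prime) (m : ℕ) :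
    ∃ hq : Polynomial ℤ, ∀ (f : ℤ → ℤ) (y : ℤ),
      (fwdDiff (1:ℤ))^[m + p] f y
        = (fwdDiff (1:ℤ))^[m] (fun x => f (x + (p:ℤ)) - f x) y
          + (p:ℤ) * (Phi hq ((fwdDiff (1:ℤ))^[m+1] f) y) := by
  obtain ⟨hq, hfact⟩ : ∃ hq : Polynomial ℤ,
      ((X : Polynomial ℤ) - 1)^p = (X^p - 1) + C (p:ℤ) * (hq * (X - 1)) := by
    have hcoeff : ∀ i, (p:ℤ) ∣ (((X - 1)^p - (X^p - 1) : Polynomial ℤ)).coeff i := by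
      intro i
      have hmap : (((X - 1)^p - (X^p - 1) : Polynomial ℤ)).map (Int.castRingHom (ZMod p)) = 0 := by
        haveI := Fact.mk hp
        simp only [Polynomial.map_sub, Polynomial.map_pow, Polynomial.map_X, Polynomial.map_one]
        rw [sub_pow_char]
        ring
      have h2 := congrArg (fun q : Polynomial (ZMod p) => q.coeff i) hmap
      simp only [Polynomial.coeff_map, Polynomial.coeff_zero] at h2
      exact (ZMod.intCast_zmod_eq_zero_iff_dvd _ p).mp h2
    obtain ⟨q1, hq1⟩ := (Polynomial.C_dvd_iff_dvd_coeff ((p:ℤ)) _).mpr hcoeff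
    have hroot : q1.IsRoot 1 := by
      have h0 : (((X - 1)^p - (X^p - 1) : Polynomial ℤ)).eval 1 = 0 := by simp [hp.ne_zero]
      rw [hq1] at h0
      simp only [Polynomial.eval_mul, Polynomial.eval_C] at h0
      have hpne : (p:ℤ) ≠ 0 := by have := hp.pos; omega
      exact (mul_eq_zero.mp h0).resolve_left hpne
    obtain ⟨q2, hq2⟩ := Polynomial.dvd_iff_isRoot.mpr hroot
    refine ⟨q2, ?_⟩
    rw [show (X - Polynomial.C (1:ℤ)) = (X - 1 : Polynomial ℤ) by rw [Polynomial.C_1]] at hq2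
    rw [hq2] at hq1
    linear_combination hq1
  refine ⟨hq, fun f y => ?_⟩
  have hDn : (fwdDiff (1:ℤ))^[m+p] f = Phi ((X-1)^(m+p)) f := (Phi_pow_X_sub_one _ f).symm
  have hpoly : ((X:Polynomial ℤ) - 1)^(m+p)
      = (X-1)^m * (X^p - 1) + C (p:ℤ) * (hq * (X-1)^(m+1)) := by
    rw [pow_add, hfact]
    ring
  rw [hDn, hpoly, map_add, map_mul, map_mul, map_mul, LinearMap.add_apply, Pi.add_apply,
    Module.End.mul_apply, Module.End.mul_apply, Module.End.mul_apply]
  congr 1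
  · have h1 : Phi ((X^p : Polynomial ℤ) - 1) f = fun x => f (x + (p:ℤ)) - f x := by
      rw [Phi, map_sub, map_pow, aeval_X, map_one]
      funext x
      rw [LinearMap.sub_apply, Pi.sub_apply, Module.End.one_apply, shiftₗ_pow_apply]
      congr 2
      simp
    rw [h1, Phi_pow_X_sub_one]
  · rw [Phi_pow_X_sub_one, Phi, aeval_C, Algebra.algebraMap_eq_smul_one,
      LinearMap.smul_apply, Module.End.one_apply, Pi.smul_apply, smul_eq_mul]

private lemma main_dvd (p : ℕ) (hp : p.Prime) :
    ∀ n j : ℕ, ∀ y : ℤ,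
      (p : ℤ) ^ ((((n : ℤ) - 1 - j * p) / ((p : ℤ) - 1)).toNat)
        ∣ (fwdDiff (1:ℤ))^[n] (gfun p j) y := by
  intro n
  induction n using Nat.strong_induction_on with
  | _ n IH =>
    intro j y
    by_cases h0 : ((((n : ℤ) - 1 - j * p) / ((p : ℤ) - 1)).toNat) = 0
    · rw [h0, pow_zero]; exact one_dvd _
    have hp2 : 2 ≤ p := hp.two_le
    have hb0 : (0:ℤ) < (p:ℤ) - 1 := by
      have : (2:ℤ) ≤ (p:ℤ) := by exact_mod_cast hp2
      omega
    obtain ⟨t, ht⟩ : ∃ t, ((((n : ℤ) - 1 - j * p) / ((p : ℤ) - 1)).toNat) = t + 1 :=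
      ⟨((((n : ℤ) - 1 - j * p) / ((p : ℤ) - 1)).toNat) - 1, by omega⟩
    have hnum : (p:ℤ) - 1 ≤ (n:ℤ) - 1 - (j:ℤ) * (p:ℤ) := by
      have hle := Int.le_ediv_iff_mul_le (a := (1:ℤ)) (b := (n:ℤ) - 1 - (j:ℤ) * (p:ℤ)) hb0
      omega
    have hnp : (j + 1) * p ≤ n := by
      have h1 : ((j:ℤ) + 1) * (p:ℤ) ≤ (n:ℤ) := by nlinarith
      have h2 : (((j+1) * p : ℕ) : ℤ) ≤ (n:ℤ) := by push_cast; linarith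
      exact_mod_cast h2
    have hpn : p ≤ n := le_trans (Nat.le_mul_of_pos_left p (by omega)) hnp
    obtain ⟨m, rfl⟩ : ∃ m, n = m + p := ⟨n - p, by omega⟩
    have hA : ((↑(m + p) : ℤ) - 1 - (j:ℤ) * (p:ℤ)) / ((p:ℤ) - 1) = (t:ℤ) + 1 := by omega
    obtain ⟨hqpoly, hkey⟩ := key_decomp p hp m
    rw [ht, hkey]
    apply dvd_add
    · cases j with
      | zero =>
        have hz : (fun x => gfun p 0 (x + (p:ℤ)) - gfun p 0 x) = fun _ => (0:ℤ) :=
          funext (gfun_shift_zero p)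
        rw [hz, fwdDiff_iter_eq_sum_shift]
        simp
      | succ j' =>
        have hz : (fun x => gfun p (j'+1) (x + (p:ℤ)) - gfun p (j'+1) x) = gfun p j' :=
          funext (gfun_shift p (by positivity) j')
        rw [hz]
        have hq3 : ((m:ℤ) - 1 - (j':ℤ) * (p:ℤ)) / ((p:ℤ) - 1) = (t:ℤ) + 1 := by
          rw [show ((m:ℤ) - 1 - (j':ℤ) * (p:ℤ))
              = (↑(m + p) : ℤ) - 1 - (↑(j' + 1) : ℤ) * (p:ℤ) by push_cast; ring]
          exact hA
        have H := IH m (by omega) j' y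
        rw [hq3] at H
        rwa [show ((t:ℤ) + 1).toNat = t + 1 by omega] at H
    · have hq2 : ((↑(m + 1) : ℤ) - 1 - (j:ℤ) * (p:ℤ)) / ((p:ℤ) - 1) = (t:ℤ) := by
        rw [show ((↑(m + 1) : ℤ) - 1 - (j:ℤ) * (p:ℤ))
            = ((↑(m + p) : ℤ) - 1 - (j:ℤ) * (p:ℤ)) + (-1) * ((p:ℤ) - 1) by push_cast; ring,
          Int.add_mul_ediv_right _ _ (ne_of_gt hb0), hA]
        ring
      have hstep : ∀ x : ℤ, (p:ℤ)^t ∣ (fwdDiff (1:ℤ))^[m+1] (gfun p j) x := by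
        intro x
        have H := IH (m+1) (by omega) j x
        rw [hq2] at H
        rwa [show ((t:ℤ)).toNat = t by omega] at H
      have h2 := Phi_dvd ((p:ℤ)^t) hqpoly _ hstep y
      rw [pow_succ']
      exact mul_dvd_mul (dvd_refl _) h2

private lemma S_eq (p : ℕ) (n j : ℕ) (r : ℤ) :
    (∑ k ∈ (Finset.range (n + 1)).filter (fun k : ℕ => (k : ℤ) ≡ r [ZMOD (p : ℤ)]),
        (-1) ^ (n - k) * (n.choose k : ℤ) * Ring.choose (((k : ℤ) - r) / (p : ℤ)) j)
    = (fwdDiff (1:ℤ))^[n] (gfun p j) (-r) := by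
  rw [fwdDiff_iter_eq_sum_shift, Finset.sum_filter]
  apply Finset.sum_congr rfl
  intro k _
  have hxy : -r + k • (1:ℤ) = (k:ℤ) - r := by
    simp only [nsmul_eq_mul, mul_one]; ring
  rw [hxy]
  unfold gfun
  by_cases hd : ((k:ℤ)) ≡ r [ZMOD (p:ℤ)]
  · have hdvd : (p:ℤ) ∣ (k:ℤ) - r := dvd_sub_comm.mp (Int.ModEq.dvd hd)
    rw [if_pos hd, if_pos hdvd, smul_eq_mul]
  · have hdvd : ¬ (p:ℤ) ∣ (k:ℤ) - r := by
      intro hcon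
      exact hd ((Int.modEq_iff_dvd).mpr (dvd_sub_comm.mp hcon))
    rw [if_neg hd, if_neg hdvd, smul_eq_mul, mul_zero]

/-- **Sharp Congruence I** (Theorem 1.1).  For a prime `p`, a positive integer `n`,
an integer `r` and `j ≥ 0`, the sum `∑_{k ≡ r mod p} (-1)^(n-k) C(n,k) C((k-r)/p, j)`
is divisible by `p^[(n-1-jp)/(p-1)]`, where `[x]` is the floor of `x` when `x ≥ 0`
and `0` otherwise. -/
theorem fleck_type_congruence (p : ℕ) (hp : p.Prime) (n : ℕ) (hn : 0 < n) (r : ℤ) (j : ℕ) :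
    (p : ℤ) ^ ((((n : ℤ) - 1 - j * p) / ((p : ℤ) - 1)).toNat) ∣
      ∑ k ∈ (Finset.range (n + 1)).filter (fun k : ℕ => (k : ℤ) ≡ r [ZMOD (p : ℤ)]),
        (-1) ^ (n - k) * (n.choose k : ℤ) * Ring.choose (((k : ℤ) - r) / (p : ℤ)) j := by
  rw [S_eq p n j r]
  exact main_dvd p hp n j (-r)
end

section
/- Let p be a prime, a and n positive integers, r an integer, and j a non-negative integer. Then the sum over all integers k with 0 ≤ k ≤ n and k ≡ r (mod p^a) of (-1)^(n-k) · C(n,k) · C((k-r)/p^a, j) is divisible by p^[(n - p^(a-1) - j·p^a)/(p^(a-1)(p-1))]. -/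
/-!
The sum is `Λ ((X - 1) ^ n)` for the `ℤ`-linear functional `Λ (X ^ k) = [k ≡ r] C((k - r) / q, j)`,
`q = p ^ a`. Multiplying by `X ^ q - 1` replaces the weights of `Λ` by their `q`-step forward
difference, which lowers `j` by one (Pascal's rule), so `Λ` kills `(X ^ q - 1) ^ i * P` for `i > j`.
On the other hand, rewriting `(X - 1) ^ q = (X ^ q - 1) - ∑_{0<c<q} C(q, c) (X - 1) ^ c` expresses
`(X - 1) ^ n` through the products `(X ^ q - 1) ^ i (X - 1) ^ b` with `b < q`, and Kummer's theorem
`v_p C(q, c) = a - v_p(c)` shows that such a product comes with a factor `p ^ e` as soon as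
`e p^(a-1) (p - 1) ≥ n - b - i q`. For `i ≤ j` this `e` is at least the claimed exponent.
-/

open Finset Polynomial fwdDiff

section Pairing

variable {R : Type*} [CommRing R]

def coeffPairing (f : ℕ → R) : R[X] →ₗ[R] R := lsum fun k => f k • LinearMap.id

theorem coeffPairing_monomial (f : ℕ → R) (k : ℕ) (c : R) :
    coeffPairing f (monomial k c) = f k * c := by
  simp [coeffPairing]

theorem coeffPairing_X_pow_sub_one_mul (f : ℕ → R) (q : ℕ) (P : R[X]) :
    coeffPairing f ((X ^ q - 1) * P) = coeffPairing (Δ_[q] f) P := by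
  induction P using Polynomial.induction_on' with
  | add P Q hP hQ => simp only [mul_add, map_add, hP, hQ]
  | monomial k c =>
    rw [sub_mul, one_mul, X_pow_mul_monomial, map_sub, coeffPairing_monomial,
      coeffPairing_monomial, coeffPairing_monomial, fwdDiff, add_comm k, sub_mul]

theorem coeffPairing_X_pow_sub_one_pow_mul (f : ℕ → R) (q m : ℕ) (P : R[X]) :
    coeffPairing f ((X ^ q - 1) ^ m * P) = coeffPairing ((fwdDiff q)^[m] f) P := by
  induction m generalizing f with
  | zero => simp
  | succ m ih =>
    rw [pow_succ', mul_assoc, coeffPairing_X_pow_sub_one_mul, ih, Function.iterate_succ_apply]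

theorem coeffPairing_eq_sum_range (f : ℕ → R) {P : R[X]} {n : ℕ} (hP : P.natDegree < n) :
    coeffPairing f P = ∑ k ∈ range n, f k * P.coeff k := by
  simp only [coeffPairing, lsum_apply, LinearMap.smul_apply, LinearMap.id_apply, smul_eq_mul]
  exact sum_over_range' P (fun _ => mul_zero _) n hP

end Pairing

def progressionChoose (q : ℕ) (r : ℤ) (j k : ℕ) : ℤ :=
  if (k : ℤ) ≡ r [ZMOD q] then Ring.choose (((k : ℤ) - r) / q) j else 0

section ProgressionChoose

variable {q : ℕ} {r : ℤ}

theorem natCast_add_modEq_iff (k : ℕ) :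
    ((k + q : ℕ) : ℤ) ≡ r [ZMOD q] ↔ (k : ℤ) ≡ r [ZMOD q] := by
  push_cast
  exact Int.add_modulus_modEq_iff

theorem fwdDiff_progressionChoose_zero : Δ_[q] (progressionChoose q r 0) = 0 := by
  ext k
  simp [fwdDiff, progressionChoose]

theorem fwdDiff_progressionChoose_succ (hq : 0 < q) (j : ℕ) :
    Δ_[q] (progressionChoose q r (j + 1)) = progressionChoose q r j := by
  ext k
  simp only [fwdDiff, progressionChoose, natCast_add_modEq_iff]
  split_ifs
  · have : (((k + q : ℕ) : ℤ) - r) / q = ((k : ℤ) - r) / q + 1 := by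
      push_cast
      rw [add_sub_right_comm, Int.add_ediv_of_dvd_right (dvd_refl _), Int.ediv_self (by omega)]
    rw [this, Ring.choose_succ_succ, add_sub_cancel_right]
  · exact sub_self 0

theorem fwdDiff_iter_progressionChoose_of_lt (hq : 0 < q) {j m : ℕ} (h : j < m) :
    (fwdDiff q)^[m] (progressionChoose q r j) = 0 := by
  induction j generalizing m with
  | zero =>
    obtain ⟨m, rfl⟩ := Nat.exists_eq_add_of_le' (show 1 ≤ m by omega)
    rw [Function.iterate_succ_apply, fwdDiff_progressionChoose_zero]
    exact Function.iterate_fixed (fwdDiff_const q (0 : ℤ)) m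
  | succ j ih =>
    obtain ⟨m, rfl⟩ := Nat.exists_eq_add_of_le' (show 1 ≤ m by omega)
    rw [Function.iterate_succ_apply, fwdDiff_progressionChoose_succ hq, ih (by omega)]

end ProgressionChoose

theorem pow_eq_add_one_pow_sub_sum {R : Type*} [CommRing R] (x : R) {q : ℕ} (hq : 0 < q) :
    x ^ q = ((x + 1) ^ q - 1) - ∑ c ∈ Ico 1 q, (q.choose c : R) * x ^ c := by
  rw [add_pow, sum_range_succ, range_eq_Ico, sum_eq_sum_Ico_succ_bot hq]
  simp only [one_pow, mul_one, pow_zero, Nat.choose_zero_right, Nat.choose_self, Nat.cast_one]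
  rw [← sum_congr rfl fun c _ => mul_comm (x ^ c) (q.choose c : R)]
  ring

theorem prime_pow_sub_le_sub_factorization_mul {p : ℕ} (hp : p.Prime) {a c : ℕ} (hc : c ≠ 0)
    (hca : c < p ^ a) :
    (p ^ a : ℤ) - c ≤ (a - c.factorization p : ℕ) * ((p : ℤ) ^ (a - 1) * ((p : ℤ) - 1)) := by
  set v := c.factorization p
  have hpv : p ^ v ≤ c := Nat.le_of_dvd (Nat.pos_of_ne_zero hc) (Nat.ordProj_dvd c p)
  have hva : v < a := (Nat.pow_lt_pow_iff_right hp.one_lt).mp (hpv.trans_lt hca)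
  have hp2 : (2 : ℤ) ≤ p := by exact_mod_cast hp.two_le
  have hpa : (p : ℤ) ^ a = p ^ (a - 1) * p := by rw [← pow_succ, Nat.sub_add_cancel (by omega)]
  rcases Nat.lt_or_ge (v + 1) a with hv | hv
  · calc (p ^ a : ℤ) - c ≤ p ^ (a - 1) * p := by rw [hpa]; linarith [Int.natCast_nonneg c]
      _ ≤ 2 * (p ^ (a - 1) * (p - 1)) := by nlinarith
      _ ≤ _ := by
        gcongr
        · nlinarith
        · exact_mod_cast (by omega : 2 ≤ a - v)
  · have hv : v = a - 1 := by omega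
    have : (p : ℤ) ^ (a - 1) ≤ c := by rw [← hv]; exact_mod_cast hpv
    rw [show a - v = 1 by omega, hpa]
    push_cast
    linarith

theorem pow_sub_factorization_dvd_choose {p : ℕ} (hp : p.Prime) {a c : ℕ} (hc : c ≠ 0)
    (hca : c ≤ p ^ a) : p ^ (a - c.factorization p) ∣ (p ^ a).choose c := by
  rw [← Nat.factorization_choose_prime_pow hp hca hc]
  exact Nat.ordProj_dvd _ p

noncomputable def weightedSpan (p a n : ℕ) : Submodule ℤ ℤ[X] :=
  Submodule.span ℤ {P | ∃ b < p ^ a, ∃ i e : ℕ,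
    (n : ℤ) - b - i * p ^ a ≤ e * ((p : ℤ) ^ (a - 1) * ((p : ℤ) - 1)) ∧
      P = (p : ℤ) ^ e • ((X ^ p ^ a - 1) ^ i * (X - 1) ^ b)}

theorem smul_mem_weightedSpan {p a n b i e : ℕ} (hb : b < p ^ a)
    (he : (n : ℤ) - b - i * p ^ a ≤ e * ((p : ℤ) ^ (a - 1) * ((p : ℤ) - 1))) :
    (p : ℤ) ^ e • ((X ^ p ^ a - 1) ^ i * (X - 1) ^ b) ∈ weightedSpan p a n :=
  Submodule.subset_span ⟨b, hb, i, e, he, rfl⟩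

theorem X_sub_one_mul_smul_mem_weightedSpan {p : ℕ} (hp : p.Prime) {a n b i e : ℕ}
    (hb : b < p ^ a) (he : (n : ℤ) - b - i * p ^ a ≤ e * ((p : ℤ) ^ (a - 1) * ((p : ℤ) - 1))) :
    (X - 1) * ((p : ℤ) ^ e • ((X ^ p ^ a - 1) ^ i * (X - 1) ^ b)) ∈ weightedSpan p a (n + 1) := by
  have hq : 0 < p ^ a := pow_pos hp.pos a
  rw [mul_smul_comm, mul_left_comm, ← pow_succ']
  rcases Nat.lt_or_ge (b + 1) (p ^ a) with hb1 | hb1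
  · exact smul_mem_weightedSpan hb1 (by push_cast; linarith)
  have hX : ((X ^ p ^ a - 1) ^ i * (X - 1) ^ p ^ a : ℤ[X]) =
      (X ^ p ^ a - 1) ^ (i + 1) * (X - 1) ^ 0 -
      ∑ c ∈ Ico 1 (p ^ a), ((p ^ a).choose c : ℤ) • ((X ^ p ^ a - 1) ^ i * (X - 1) ^ c) := by
    rw [pow_eq_add_one_pow_sub_sum (X - 1 : ℤ[X]) hq, sub_add_cancel, mul_sub, mul_sum, pow_succ,
      pow_zero, mul_one]
    simp only [zsmul_eq_mul, Int.cast_natCast]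
    congr 1
    exact sum_congr rfl fun c _ => mul_left_comm _ _ _
  rw [show b + 1 = p ^ a by omega, hX, smul_sub, smul_sum]
  refine Submodule.sub_mem _ (smul_mem_weightedSpan (b := 0) hq ?_)
    (Submodule.sum_mem _ fun c hc => ?_)
  · push_cast; linarith
  obtain ⟨hc0, hcq⟩ := mem_Ico.mp hc
  obtain ⟨m, hm⟩ := pow_sub_factorization_dvd_choose hp (a := a) (c := c) (by omega) hcq.le
  have hle := prime_pow_sub_le_sub_factorization_mul hp (by omega : c ≠ 0) hcq
  rw [smul_comm, hm, Nat.cast_mul, Nat.cast_pow, mul_comm, ← smul_smul, smul_smul _ ((p : ℤ) ^ e),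
    ← pow_add]
  refine Submodule.smul_mem _ _ (smul_mem_weightedSpan hcq ?_)
  push_cast at hle ⊢
  linarith

theorem X_sub_one_mul_mem_weightedSpan {p : ℕ} (hp : p.Prime) {a n : ℕ} {P : ℤ[X]}
    (hP : P ∈ weightedSpan p a n) : (X - 1) * P ∈ weightedSpan p a (n + 1) := by
  induction hP using Submodule.span_induction with
  | mem P hP =>
    obtain ⟨b, hb, i, e, he, rfl⟩ := hP
    exact X_sub_one_mul_smul_mem_weightedSpan hp hb he
  | zero => simp
  | add P Q _ _ hP hQ => simpa only [mul_add] using Submodule.add_mem _ hP hQ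
  | smul c P _ hP => simpa only [mul_smul_comm] using Submodule.smul_mem _ c hP

theorem X_sub_one_pow_mem_weightedSpan {p : ℕ} (hp : p.Prime) (a n : ℕ) :
    (X - 1 : ℤ[X]) ^ n ∈ weightedSpan p a n := by
  induction n with
  | zero =>
    simpa using smul_mem_weightedSpan (p := p) (a := a) (n := 0) (b := 0) (i := 0) (e := 0)
      (pow_pos hp.pos a) (by simp)
  | succ n ih => exact pow_succ' (X - 1 : ℤ[X]) n ▸ X_sub_one_mul_mem_weightedSpan hp ih

theorem toNat_ediv_le_of_sub_le_mul {p : ℕ} (hp : p.Prime) {a n b i j e : ℕ} (hb : b < p ^ a)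
    (hij : i ≤ j)
    (he : (n : ℤ) - b - i * p ^ a ≤ e * ((p : ℤ) ^ (a - 1) * ((p : ℤ) - 1))) :
    (((n : ℤ) - p ^ (a - 1) - j * p ^ a) / ((p : ℤ) ^ (a - 1) * ((p : ℤ) - 1))).toNat ≤ e := by
  have hp1 : (1 : ℤ) < p := by exact_mod_cast hp.one_lt
  have hD : 0 < (p : ℤ) ^ (a - 1) * ((p : ℤ) - 1) := mul_pos (by positivity) (by linarith)
  have hq : (p : ℤ) ^ a ≤ p ^ (a - 1) * p := by
    rw [← pow_succ]; exact pow_le_pow_right₀ hp1.le (by omega)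
  have hb' : (b : ℤ) + 1 ≤ p ^ a := by exact_mod_cast hb
  have hij' : (i : ℤ) * p ^ a ≤ j * p ^ a := by gcongr
  rw [Int.toNat_le, ← Int.lt_add_one_iff]
  exact Int.ediv_lt_of_lt_mul hD (by linarith)

theorem coeffPairing_progressionChoose_X_pow_sub_one_pow_mul {q : ℕ} (hq : 0 < q) (r : ℤ)
    {j m : ℕ} (h : j < m) (P : ℤ[X]) :
    coeffPairing (progressionChoose q r j) ((X ^ q - 1) ^ m * P) = 0 := by
  rw [coeffPairing_X_pow_sub_one_pow_mul, fwdDiff_iter_progressionChoose_of_lt hq h]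
  simp [coeffPairing, Polynomial.sum_def]

theorem pow_dvd_coeffPairing_of_mem_weightedSpan {p : ℕ} (hp : p.Prime) {a n : ℕ} (r : ℤ)
    (j : ℕ) {P : ℤ[X]} (hP : P ∈ weightedSpan p a n) :
    (p : ℤ) ^ ((((n : ℤ) - p ^ (a - 1) - j * p ^ a) / ((p : ℤ) ^ (a - 1) * ((p : ℤ) - 1))).toNat) ∣
      coeffPairing (progressionChoose (p ^ a) r j) P := by
  induction hP using Submodule.span_induction with
  | mem P hP =>
    obtain ⟨b, hb, i, e, he, rfl⟩ := hP
    rw [map_smul, smul_eq_mul]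
    rcases le_or_gt i j with hij | hji
    · exact dvd_mul_of_dvd_left (pow_dvd_pow _ (toNat_ediv_le_of_sub_le_mul hp hb hij he)) _
    · rw [coeffPairing_progressionChoose_X_pow_sub_one_pow_mul (pow_pos hp.pos a) r hji, mul_zero]
      exact dvd_zero _
  | zero => simp
  | add _ _ _ _ hP hQ => rw [map_add]; exact dvd_add hP hQ
  | smul c _ _ hP => rw [map_smul, smul_eq_mul]; exact dvd_mul_of_dvd_right hP c

theorem sum_filter_modEq_eq_coeffPairing (q n : ℕ) (r : ℤ) (j : ℕ) :
    ∑ k ∈ (range (n + 1)).filter (fun k : ℕ => (k : ℤ) ≡ r [ZMOD q]),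
      (-1) ^ (n - k) * (n.choose k : ℤ) * Ring.choose (((k : ℤ) - r) / q) j =
      coeffPairing (progressionChoose q r j) ((X - 1) ^ n) := by
  rw [coeffPairing_eq_sum_range _ (n := n + 1) (by compute_degree!), sum_filter]
  refine sum_congr rfl fun k _ => ?_
  rw [show (X - 1 : ℤ[X]) = X + C (-1) by simp [sub_eq_add_neg], coeff_X_add_C_pow,
    progressionChoose]
  split_ifs <;> ring

theorem weisman_type_congruence_general (p : ℕ) (hp : p.Prime) (a n : ℕ)
    (r : ℤ) (j : ℕ) :
    (p : ℤ) ^ ((((n : ℤ) - (p : ℤ) ^ (a - 1) - j * (p : ℤ) ^ a) /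
        ((p : ℤ) ^ (a - 1) * ((p : ℤ) - 1))).toNat) ∣
      ∑ k ∈ (Finset.range (n + 1)).filter (fun k : ℕ => (k : ℤ) ≡ r [ZMOD ((p : ℤ) ^ a)]),
        (-1) ^ (n - k) * (n.choose k : ℤ) * Ring.choose (((k : ℤ) - r) / (p : ℤ) ^ a) j := by
  have hsum := sum_filter_modEq_eq_coeffPairing (p ^ a) n r j
  push_cast at hsum
  rw [hsum]
  exact pow_dvd_coeffPairing_of_mem_weightedSpan hp r j (X_sub_one_pow_mem_weightedSpan hp a n)

/-- **Sharp Congruence I for `ψ^a`** (Theorem 1.3).  For a prime `p`, positive integers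
`a` and `n`, an integer `r` and `j ≥ 0`, the sum
`∑_{k ≡ r mod p^a} (-1)^(n-k) C(n,k) C((k-r)/p^a, j)` is divisible by
`p^[(n - p^(a-1) - j p^a)/(p^(a-1)(p-1))]`, where `[x]` is the floor of `x` when
`x ≥ 0` and `0` otherwise. -/
theorem weisman_type_congruence (p : ℕ) (hp : p.Prime) (a n : ℕ) (ha : 0 < a) (hn : 0 < n)
    (r : ℤ) (j : ℕ) :
    (p : ℤ) ^ ((((n : ℤ) - (p : ℤ) ^ (a - 1) - j * (p : ℤ) ^ a) /
        ((p : ℤ) ^ (a - 1) * ((p : ℤ) - 1))).toNat) ∣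
      ∑ k ∈ (Finset.range (n + 1)).filter (fun k : ℕ => (k : ℤ) ≡ r [ZMOD ((p : ℤ) ^ a)]),
        (-1) ^ (n - k) * (n.choose k : ℤ) * Ring.choose (((k : ℤ) - r) / (p : ℤ) ^ a) j :=
  weisman_type_congruence_general p hp a n r j
end

section
/- Let p be a prime, n ≥ 0 an integer, r an integer, and j a non-negative integer. Then the sum over all integers k with 0 ≤ k ≤ n and k ≡ r (mod p) of (-1)^(n-k) · C(n,k) · C((k-r)/p, j) is divisible by p^[(n-jp)/p]. -/
open Finset
open Finset

lemma weakH (N : ℕ) (f : ℕ → ℤ) :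
    ∑ k ∈ range (N+2), (-1:ℤ)^k * ((N+1).choose k : ℤ) * f k
      = ∑ k ∈ range (N+1), (-1:ℤ)^k * (N.choose k : ℤ) * f k
        - ∑ k ∈ range (N+1), (-1:ℤ)^k * (N.choose k : ℤ) * f (k+1) := by
  have h1 := Finset.sum_range_succ' (fun k => (-1:ℤ)^k * ((N+1).choose k) * f k) (N+1)
  have h2 := Finset.sum_range_succ' (fun k => (-1:ℤ)^k * (N.choose k) * f k) (N+1)
  have h3 := Finset.sum_range_succ (fun k => (-1:ℤ)^k * (N.choose k) * f k) (N+1)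
  simp only [Nat.choose_succ_succ, Nat.cast_add, Nat.choose_zero_right, Nat.cast_one, pow_zero,
    pow_succ, Nat.choose_succ_self, Nat.cast_zero, one_mul, mul_one, mul_zero, zero_mul,
    add_zero] at h1 h2 h3
  rw [h3] at h2
  rw [h1]
  simp only [mul_add, add_mul, Finset.sum_add_distrib]
  have hneg : ∑ x ∈ range (N+1), (-1:ℤ)^x * -1 * (N.choose x : ℤ) * f (x+1)
      = - ∑ x ∈ range (N+1), (-1:ℤ)^x * (N.choose x : ℤ) * f (x+1) := by
    rw [← Finset.sum_neg_distrib]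
    exact Finset.sum_congr rfl (fun x _ => by ring)
  linarith [h2, hneg]

noncomputable def weakA (p : ℕ) (r : ℤ) (j : ℕ) (k : ℕ) : ℤ :=
  if (k : ℤ) ≡ r [ZMOD (p:ℤ)] then Ring.choose (((k:ℤ) - r) / (p:ℤ)) j else 0

noncomputable def weakS (p n : ℕ) (r : ℤ) (j : ℕ) : ℤ :=
  ∑ k ∈ range (n+1), (-1:ℤ)^k * (n.choose k : ℤ) * weakA p r j k

lemma weakA_succ (p : ℕ) (r : ℤ) (j : ℕ) (k : ℕ) :
    weakA p r j (k+1) = weakA p (r-1) j k := by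
  unfold weakA
  have hiff : ((k+1 : ℕ) : ℤ) ≡ r [ZMOD (p:ℤ)] ↔ (k : ℤ) ≡ r - 1 [ZMOD (p:ℤ)] := by
    push_cast
    constructor
    · intro h; simpa using h.sub_right 1
    · intro h; simpa using h.add_right 1
  have hval : (((k+1:ℕ):ℤ) - r) = ((k:ℤ) - (r-1)) := by push_cast; ring
  rw [hval]
  exact if_congr hiff rfl rfl

lemma weakA_sub_p_succ (p : ℕ) (hp : 0 < p) (r : ℤ) (j : ℕ) (k : ℕ) :
    weakA p (r - p) (j+1) k = weakA p r (j+1) k + weakA p r j k := by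
  unfold weakA
  have hiff : (k : ℤ) ≡ r - p [ZMOD (p:ℤ)] ↔ (k : ℤ) ≡ r [ZMOD (p:ℤ)] := by
    unfold Int.ModEq
    rw [← Int.emod_eq_sub_self_emod]
  by_cases h : (k : ℤ) ≡ r [ZMOD (p:ℤ)]
  · rw [if_pos (hiff.mpr h), if_pos h, if_pos h]
    have hdiv : ((k:ℤ) - (r - p)) / p = ((k:ℤ) - r) / p + 1 := by
      have : (k:ℤ) - (r - p) = ((k:ℤ) - r) + 1 * p := by ring
      rw [this, Int.add_mul_ediv_right _ _ (by exact_mod_cast hp.ne')]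
    rw [hdiv, Ring.choose_succ_succ]
    ring
  · rw [if_neg (fun hc => h (hiff.mp hc)), if_neg h, if_neg h]; ring

lemma weakA_sub_p_zero (p : ℕ) (r : ℤ) (k : ℕ) :
    weakA p (r - p) 0 k = weakA p r 0 k := by
  unfold weakA
  have hiff : (k : ℤ) ≡ r - p [ZMOD (p:ℤ)] ↔ (k : ℤ) ≡ r [ZMOD (p:ℤ)] := by
    unfold Int.ModEq
    rw [← Int.emod_eq_sub_self_emod]
  simp [Ring.choose_zero_right, hiff]

lemma weakS_pascal (p n : ℕ) (r : ℤ) (j : ℕ) :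
    weakS p (n+1) r j = weakS p n r j - weakS p n (r-1) j := by
  unfold weakS
  rw [show n+1+1 = n+2 from rfl, weakH n (weakA p r j)]
  congr 1
  exact Finset.sum_congr rfl (fun k _ => by rw [weakA_succ])

lemma weakS_shift_succ (p : ℕ) (hp : 0 < p) (n : ℕ) (r : ℤ) (j : ℕ) :
    weakS p n (r - p) (j+1) = weakS p n r (j+1) + weakS p n r j := by
  unfold weakS
  rw [← Finset.sum_add_distrib]
  exact Finset.sum_congr rfl (fun k _ => by rw [weakA_sub_p_succ p hp]; ring)

lemma weakS_shift_zero (p : ℕ) (n : ℕ) (r : ℤ) :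
    weakS p n (r - p) 0 = weakS p n r 0 := by
  unfold weakS
  exact Finset.sum_congr rfl (fun k _ => by rw [weakA_sub_p_zero])

lemma weakS_step (p n m : ℕ) (r : ℤ) (j : ℕ) :
    weakS p (n+m) r j = ∑ i ∈ range (m+1), (-1:ℤ)^i * (m.choose i : ℤ) * weakS p n (r - i) j := by
  induction m generalizing r with
  | zero => simp
  | succ m ih =>
    rw [show n + (m+1) = (n+m) + 1 from rfl, weakS_pascal, ih r, ih (r-1),
      show m+1+1 = m+2 from rfl, weakH m (fun i => weakS p n (r - i) j)]
    congr 1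
    refine Finset.sum_congr rfl (fun i _ => ?_)
    have : r - 1 - (i:ℤ) = r - ((i:ℕ)+1 : ℕ) := by push_cast; ring
    rw [this]

lemma weak_main (p : ℕ) (hp : p.Prime) : ∀ n : ℕ, ∀ r : ℤ, ∀ j : ℕ,
    (p:ℤ) ^ ((((n:ℤ) - j*p)/(p:ℤ)).toNat) ∣ weakS p n r j := by
  intro n
  induction n using Nat.strong_induction_on with
  | _ n ih =>
  intro r j
  by_cases he : (((n:ℤ) - j*p)/(p:ℤ)).toNat = 0
  · rw [he, pow_zero]; exact one_dvd _
  have hp0 : (0:ℤ) < p := by exact_mod_cast hp.pos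
  have h1 : 1 ≤ ((n:ℤ) - j*p)/(p:ℤ) := by omega
  have hnp : (p:ℤ) + (j:ℤ)*p ≤ (n:ℤ) := by
    have := (Int.le_ediv_iff_mul_le hp0).mp h1; linarith
  have hjp : 0 ≤ (j:ℤ)*p := by positivity
  have hn : p ≤ n := by exact_mod_cast (by linarith : (p:ℤ) ≤ (n:ℤ))
  obtain ⟨n₀, rfl⟩ : ∃ n₀, n = n₀ + p := ⟨n - p, by omega⟩
  have hE : (((n₀+p:ℕ):ℤ) - (j:ℤ)*p)/(p:ℤ) = (((n₀:ℤ) - (j:ℤ)*p)/(p:ℤ)) + 1 := by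
    push_cast
    rw [show (n₀:ℤ) + p - (j:ℤ)*p = ((n₀:ℤ) - (j:ℤ)*p) + 1*p by ring,
      Int.add_mul_ediv_right _ _ hp0.ne']
  set E := (((n₀+p:ℕ):ℤ) - (j:ℤ)*p)/(p:ℤ) with hEdef
  set Y := ((n₀:ℤ) - (j:ℤ)*p)/(p:ℤ) with hYdef
  have hee : E.toNat = Y.toNat + 1 := by omega
  rw [weakS_step p n₀ p r j]
  obtain ⟨p₀, hpp⟩ : ∃ p₀, p = p₀ + 1 := ⟨p - 1, by omega⟩
  rw [Finset.sum_range_succ]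
  have hsplit : ∑ i ∈ range p, (-1:ℤ)^i * (p.choose i : ℤ) * weakS p n₀ (r - i) j
      = (∑ i ∈ range p₀, (-1:ℤ)^(i+1) * (p.choose (i+1) : ℤ) * weakS p n₀ (r - (i+1:ℕ)) j)
        + (-1:ℤ)^0 * (p.choose 0 : ℤ) * weakS p n₀ (r - (0:ℕ)) j := by
    rw [show range p = range (p₀+1) by rw [hpp]]
    exact Finset.sum_range_succ' _ p₀
  rw [hsplit, hee, pow_succ]
  have hmid : (p:ℤ)^Y.toNat * p ∣
      ∑ i ∈ range p₀, (-1:ℤ)^(i+1) * (p.choose (i+1) : ℤ) * weakS p n₀ (r - (i+1:ℕ)) j := by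
    refine Finset.dvd_sum (fun i hi => ?_)
    have hi' : i < p₀ := Finset.mem_range.mp hi
    have hc : (p:ℤ) ∣ ((p.choose (i+1) : ℕ) : ℤ) :=
      Int.natCast_dvd_natCast.mpr (hp.dvd_choose_self (by omega) (by omega))
    have hs : (p:ℤ)^Y.toNat ∣ weakS p n₀ (r - (i+1:ℕ)) j := ih n₀ (by omega) _ j
    have : (p:ℤ)^Y.toNat * p ∣ (p.choose (i+1) : ℤ) * weakS p n₀ (r - (i+1:ℕ)) j := by
      rw [mul_comm ((p:ℤ)^Y.toNat) (p:ℤ)]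
      exact mul_dvd_mul hc hs
    calc (p:ℤ)^Y.toNat * p ∣ (p.choose (i+1) : ℤ) * weakS p n₀ (r - (i+1:ℕ)) j := this
      _ ∣ (-1:ℤ)^(i+1) * ((p.choose (i+1) : ℤ) * weakS p n₀ (r - (i+1:ℕ)) j) := Dvd.dvd.mul_left dvd_rfl _
      _ = (-1:ℤ)^(i+1) * (p.choose (i+1) : ℤ) * weakS p n₀ (r - (i+1:ℕ)) j := by ring
  have hunit : (p:ℤ) ∣ (1 + (-1:ℤ)^p) := by
    rcases hp.eq_two_or_odd' with h2 | hodd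
    · subst h2; norm_num
    · rw [hodd.neg_one_pow]; simp
  have hends : (p:ℤ)^Y.toNat * p ∣
      (-1:ℤ)^0 * (p.choose 0 : ℤ) * weakS p n₀ (r - (0:ℕ)) j
        + (-1:ℤ)^p * (p.choose p : ℤ) * weakS p n₀ (r - (p:ℕ)) j := by
    have h0 : (-1:ℤ)^0 * (p.choose 0 : ℤ) * weakS p n₀ (r - (0:ℕ)) j = weakS p n₀ r j := by
      simp
    have hpc : (p.choose p : ℤ) = 1 := by simp
    have hs0 : (p:ℤ)^Y.toNat ∣ weakS p n₀ r j := ih n₀ (by omega) r j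
    rcases j with _ | j'
    · have hsh : weakS p n₀ (r - (p:ℕ)) 0 = weakS p n₀ r 0 := weakS_shift_zero p n₀ r
      rw [h0, hpc, hsh, mul_one]
      have : weakS p n₀ r 0 + (-1:ℤ)^p * weakS p n₀ r 0 = (1 + (-1:ℤ)^p) * weakS p n₀ r 0 := by
        ring
      rw [this, mul_comm ((p:ℤ)^Y.toNat) (p:ℤ)]
      exact mul_dvd_mul hunit hs0
    · have hsh : weakS p n₀ (r - (p:ℕ)) (j'+1) = weakS p n₀ r (j'+1) + weakS p n₀ r j' :=
        weakS_shift_succ p hp.pos n₀ r j'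
      rw [h0, hpc, hsh, mul_one]
      have hrw : weakS p n₀ r (j'+1) + (-1:ℤ)^p * (weakS p n₀ r (j'+1) + weakS p n₀ r j')
          = (1 + (-1:ℤ)^p) * weakS p n₀ r (j'+1) + (-1:ℤ)^p * weakS p n₀ r j' := by ring
      rw [hrw]
      refine dvd_add ?_ ?_
      · rw [mul_comm ((p:ℤ)^Y.toNat) (p:ℤ)]
        exact mul_dvd_mul hunit (ih n₀ (by omega) r (j'+1))
      · have hj' : (((n₀:ℤ) - (j':ℤ)*p)/(p:ℤ)).toNat = Y.toNat + 1 := by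
          have : ((n₀:ℤ) - (j':ℤ)*p)/(p:ℤ) = Y + 1 := by
            rw [hYdef, show (n₀:ℤ) - (j':ℤ)*p = ((n₀:ℤ) - (j'+1:ℕ)*p) + 1*p by push_cast; ring,
              Int.add_mul_ediv_right _ _ hp0.ne']
          omega
        have := ih n₀ (by omega) r j'
        rw [hj', pow_succ] at this
        exact this.mul_left _
  rw [add_assoc]
  exact dvd_add hmid hends

/-- **Weak Congruence** (Corollary to the weak estimate).  For a prime `p`, `n ≥ 0`,
an integer `r` and `j ≥ 0`, the sum `∑_{k ≡ r mod p} (-1)^(n-k) C(n,k) C((k-r)/p, j)`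
is divisible by `p^[(n-jp)/p]`, where `[x]` is the floor of `x` when `x ≥ 0`
and `0` otherwise. -/
theorem weak_fleck_type_congruence (p : ℕ) (hp : p.Prime) (n : ℕ) (r : ℤ) (j : ℕ) :
    (p : ℤ) ^ ((((n : ℤ) - j * p) / (p : ℤ)).toNat) ∣
      ∑ k ∈ (Finset.range (n + 1)).filter (fun k : ℕ => (k : ℤ) ≡ r [ZMOD (p : ℤ)]),
        (-1) ^ (n - k) * (n.choose k : ℤ) * Ring.choose (((k : ℤ) - r) / (p : ℤ)) j := by
  have hsum : ∑ k ∈ (Finset.range (n + 1)).filter (fun k : ℕ => (k : ℤ) ≡ r [ZMOD (p : ℤ)]),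
        (-1:ℤ) ^ (n - k) * (n.choose k : ℤ) * Ring.choose (((k : ℤ) - r) / (p : ℤ)) j
      = (-1:ℤ)^n * weakS p n r j := by
    unfold weakS weakA
    rw [Finset.mul_sum, Finset.sum_filter]
    refine Finset.sum_congr rfl (fun k hk => ?_)
    have hkn : k ≤ n := by
      have := Finset.mem_range.mp hk; omega
    have hsign : (-1:ℤ)^(n-k) = (-1:ℤ)^n * (-1:ℤ)^k := by
      conv_rhs => rw [← Nat.sub_add_cancel hkn]
      rw [pow_add, mul_assoc, ← pow_add]
      have : (-1:ℤ)^(k+k) = 1 := Even.neg_one_pow ⟨k, rfl⟩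
      rw [this, mul_one]
    by_cases hc : (k : ℤ) ≡ r [ZMOD (p:ℤ)]
    · simp only [if_pos hc, hsign]; ring
    · simp only [if_neg hc, mul_zero, zero_mul, hsign]
  rw [hsum]
  exact (weak_main p hp n r j).mul_left _
end

section
/- Let p be a prime, n ≥ 0 an integer, and f ∈ ℤ_p[[X]]. Suppose x_0, x_1, ..., x_{p-1} ∈ ℤ_p[[X]] satisfy X^n · f = Σ_{i=0}^{p-1} (1+X)^i · x_i((1+X)^p - 1). Then x_0 belongs to the ideal (p, X)^[n/p] of ℤ_p[[X]], i.e. the [n/p]-th power of the ideal generated by p and X. -/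
open PowerSeries

/-- Substitution of a power series `g` with zero constant term into a power series `f`:
the coefficient of `X^d` in `f(g)` is `∑_{n ≤ d} (coeff n f) · (coeff d g^n)`.
(When the constant term of `g` vanishes, `coeff d (g^n) = 0` for `n > d`, so this is
the usual substitution `f ↦ f(g)`.) -/
noncomputable def PowerSeries.subst' {R : Type*} [CommRing R] (g f : R⟦X⟧) : R⟦X⟧ :=
  PowerSeries.mk fun d => ∑ n ∈ Finset.range (d + 1), coeff n f * coeff d (g ^ n)

/-!
Write `(1 + X)^p - 1 = X^p + p r`. Then `((1 + X)^p - 1)^l` is `X^(pl)` modulo `p`, and the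
coefficient of `X^d` in any multiple of it is divisible by `p^(l - [d/p])`. Set `m = [n/p]`. Since
`X^(pm)` divides `X^n f`, the coefficients of `X^d`, `d < pm`, of `∑ (1+X)^i xᵢ((1+X)^p - 1)`
vanish. By induction on `s`, `p^min(s, m-j)` divides the `j`-th coefficient of every `xᵢ`: writing
these coefficients as `p^s uᵢ` for `j + s < m`, the coefficient of `X^(pj+r)`, `r < p`, is
`p^s ∑ᵢ uᵢ C(i, r)` modulo `p^(s+1)`, and the Pascal matrix `(C(i, r))` is unitriangular, so `p ∣ uᵢ`.
Finally `p^(m-j) ∣ coeff j x₀` for all `j` puts `x₀` in `(p, X)^m`.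
-/

open Finset

theorem dvd_of_dvd_sum_mul_choose {R : Type*} [CommRing R] (a : R) {N : ℕ} (u : Fin N → R)
    (h : ∀ r : Fin N, a ∣ ∑ i, u i * (i : ℕ).choose r) (i : Fin N) : a ∣ u i := by
  induction i using WellFoundedGT.induction with
  | _ r ih =>
    have hrest : a ∣ ∑ i ∈ univ.erase r, u i * (i : ℕ).choose r := by
      refine dvd_sum fun i hi => ?_
      rcases lt_or_gt_of_ne (Fin.val_ne_of_ne (ne_of_mem_erase hi)) with hlt | hgt
      · simp [Nat.choose_eq_zero_of_lt hlt]
      · exact (ih i hgt).mul_right _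
    have hr := h r
    rw [← add_sum_erase _ _ (mem_univ r)] at hr
    simpa using (dvd_add_left hrest).mp hr

namespace PowerSeries

variable {R : Type*} [CommRing R]

theorem coeff_one_add_X_pow (n k : ℕ) : coeff k ((1 + X : R⟦X⟧) ^ n) = n.choose k := by
  have : (1 + X : R⟦X⟧) ^ n = (((1 + Polynomial.X) ^ n : Polynomial R) : R⟦X⟧) := by
    push_cast
    rfl
  rw [this, Polynomial.coeff_coe, Polynomial.coeff_one_add_X_pow]

theorem coeff_mul_subst' (a : R⟦X⟧) {g : R⟦X⟧} (hg : constantCoeff g = 0) (φ : R⟦X⟧) (d : ℕ) :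
    coeff d (a * subst' g φ) = ∑ l ∈ range (d + 1), coeff l φ * coeff d (a * g ^ l) := by
  have hgX : ∀ {v l : ℕ}, v < l → coeff v (g ^ l) = 0 := fun hvl =>
    X_pow_dvd_iff.mp (pow_dvd_pow_of_dvd (X_dvd_iff.mpr hg) _) _ hvl
  have hterm : ∀ uv ∈ antidiagonal d, coeff uv.1 a * coeff uv.2 (subst' g φ) =
      ∑ l ∈ range (d + 1), coeff l φ * (coeff uv.1 a * coeff uv.2 (g ^ l)) := by
    rintro ⟨u, v⟩ huv
    rw [HasAntidiagonal.mem_antidiagonal] at huv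
    rw [subst', coeff_mk, mul_sum]
    refine sum_subset (range_subset_range.mpr (by omega)) (fun l _ hl => ?_) |>.trans
      (sum_congr rfl fun l _ => by ring)
    rw [hgX (by simp at hl; omega), mul_zero, mul_zero]
  rw [coeff_mul, sum_congr rfl hterm, sum_comm]
  simp_rw [← mul_sum, ← coeff_mul]

theorem mem_span_C_X_pow_of_pow_dvd_coeff (a : R) {m : ℕ} {f : R⟦X⟧}
    (h : ∀ j, a ^ (m - j) ∣ coeff j f) : f ∈ Ideal.span {C a, X} ^ m := by
  induction m generalizing f with
  | zero => simp
  | succ m ih =>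
    obtain ⟨c, hc⟩ := h 0
    rw [eq_shift_mul_X_add_const f]
    refine add_mem ?_ ?_
    · rw [pow_succ]
      exact Ideal.mul_mem_mul (ih fun j => by simpa using h (j + 1))
        (Ideal.subset_span (Set.mem_insert_of_mem _ rfl))
    · rw [← coeff_zero_eq_constantCoeff_apply, hc, Nat.sub_zero, map_mul, map_pow]
      exact Ideal.mul_mem_right _ _ (Ideal.pow_mem_pow (Ideal.subset_span (Set.mem_insert _ _)) _)

section Prime

variable {p : ℕ}

theorem exists_one_add_X_pow_sub_one_eq (hp : p.Prime) :
    ∃ r : R⟦X⟧, (1 + X) ^ p - 1 = X ^ p + C (p : R) * r := by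
  obtain ⟨r, hr⟩ := exists_add_pow_prime_eq hp (1 : R⟦X⟧) X
  exact ⟨X * r, by rw [hr, map_natCast]; ring⟩

theorem pow_dvd_coeff_mul_one_add_X_pow_sub_one_pow (hp : p.Prime) (g : R⟦X⟧) (l d : ℕ) :
    (p : R) ^ (l - d / p) ∣ coeff d (g * ((1 + X) ^ p - 1) ^ l) := by
  obtain ⟨r, hr⟩ := exists_one_add_X_pow_sub_one_eq (R := R) hp
  rw [hr, add_pow, mul_sum, map_sum]
  refine dvd_sum fun t _ => ?_
  have : g * ((X ^ p) ^ t * (C (p : R) * r) ^ (l - t) * (l.choose t : R⟦X⟧)) =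
      C ((p : R) ^ (l - t)) * (X ^ (p * t) * (g * r ^ (l - t) * (l.choose t : R⟦X⟧))) := by
    rw [map_pow, pow_mul]
    ring
  rw [this, coeff_C_mul, coeff_X_pow_mul']
  split_ifs with h
  · refine (pow_dvd_pow _ ?_).mul_right _
    have := (Nat.le_div_iff_mul_le hp.pos).mpr (mul_comm p t ▸ h)
    omega
  · simp

theorem dvd_coeff_one_add_X_pow_mul_sub_choose (hp : p.Prime) (i l d : ℕ) (h : p * l ≤ d) :
    (p : R) ∣ coeff d ((1 + X) ^ i * ((1 + X) ^ p - 1) ^ l) - i.choose (d - p * l) := by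
  obtain ⟨r, hr⟩ := exists_one_add_X_pow_sub_one_eq (R := R) hp
  obtain ⟨s, hs⟩ : C (p : R) ∣ ((1 + X) ^ p - 1) ^ l - (X ^ p) ^ l :=
    dvd_trans ⟨r, by rw [hr]; ring⟩ (sub_dvd_pow_sub_pow _ _ l)
  rw [← sub_add_cancel (((1 + X) ^ p - 1) ^ l) ((X ^ p) ^ l), hs, ← pow_mul, mul_add,
    map_add, coeff_mul_X_pow', if_pos h, coeff_one_add_X_pow, mul_left_comm, coeff_C_mul,
    add_sub_cancel_right]
  exact dvd_mul_right _ _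

end Prime

end PowerSeries

namespace WeakEstimate

variable {R : Type*} [CommRing R] {p m : ℕ} {x : Fin p → R⟦X⟧}
theorem sum_coeff_mul_coeff_eq_zero
    (hx : X ^ (p * m) ∣ ∑ i : Fin p, (1 + X) ^ (i : ℕ) * subst' ((1 + X) ^ p - 1) (x i))
    {d : ℕ} (hd : d < p * m) :
    ∑ i : Fin p, ∑ l ∈ range (d + 1),
      coeff l (x i) * coeff d ((1 + X) ^ (i : ℕ) * ((1 + X) ^ p - 1) ^ l) = 0 := by
  have hQ : constantCoeff ((1 + X : R⟦X⟧) ^ p - 1) = 0 := by simp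
  rw [← X_pow_dvd_iff.mp hx d hd, map_sum]
  exact sum_congr rfl fun i _ => (coeff_mul_subst' _ hQ _ d).symm

theorem pow_succ_dvd_coeff_mul_coeff_of_ne (hp : p.Prime) {s j r l : ℕ} {i : Fin p}
    (hs : ∀ l, (p : R) ^ min s (m - l) ∣ coeff l (x i)) (hj : j + s < m) (hr : r < p)
    (hl : l ≠ j) :
    (p : R) ^ (s + 1) ∣
      coeff l (x i) * coeff (p * j + r) ((1 + X) ^ (i : ℕ) * ((1 + X) ^ p - 1) ^ l) := by
  rcases lt_or_gt_of_ne hl with hlt | hgt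
  · have hcoeff := hs l
    rw [min_eq_left (by omega)] at hcoeff
    have hpl : p * l + p ≤ p * j := by nlinarith
    have hchoose := dvd_coeff_one_add_X_pow_mul_sub_choose (R := R) hp i l (p * j + r) (by omega)
    rw [Nat.choose_eq_zero_of_lt (by omega : (i : ℕ) < p * j + r - p * l), Nat.cast_zero,
      sub_zero] at hchoose
    exact pow_succ (p : R) s ▸ mul_dvd_mul hcoeff hchoose
  · have hQ := pow_dvd_coeff_mul_one_add_X_pow_sub_one_pow hp
      ((1 + X : R⟦X⟧) ^ (i : ℕ)) l (p * j + r)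
    rw [Nat.mul_add_div hp.pos, Nat.div_eq_of_lt hr, add_zero] at hQ
    exact (pow_dvd_pow _ (by omega)).trans (pow_add (p : R) _ _ ▸ mul_dvd_mul (hs l) hQ)

theorem pow_succ_dvd_coeff [IsDomain R] [CharZero R] (hp : p.Prime)
    (hx : X ^ (p * m) ∣ ∑ i : Fin p, (1 + X) ^ (i : ℕ) * subst' ((1 + X) ^ p - 1) (x i))
    {s : ℕ} (hs : ∀ i l, (p : R) ^ min s (m - l) ∣ coeff l (x i)) {j : ℕ} (hj : j + s < m)
    (i : Fin p) : (p : R) ^ (s + 1) ∣ coeff j (x i) := by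
  have hu : ∀ i, (p : R) ^ s ∣ coeff j (x i) := fun i => by
    simpa [min_eq_left (show s ≤ m - j by omega)] using hs i j
  choose u hu using hu
  suffices hpu : ∀ i, (p : R) ∣ u i by
    rw [hu, pow_succ]
    exact mul_dvd_mul_left _ (hpu i)
  refine dvd_of_dvd_sum_mul_choose _ u fun r => ?_
  set d := p * j + r with hd
  set a : Fin p → ℕ → R := fun i l => coeff d ((1 + X) ^ (i : ℕ) * ((1 + X) ^ p - 1) ^ l)
  have hjd : j ∈ range (d + 1) := by
    have := Nat.le_mul_of_pos_left j hp.pos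
    rw [mem_range]
    omega
  have hdm : d < p * m := by
    have := Nat.mul_le_mul_left p (show j + 1 ≤ m by omega)
    rw [mul_add_one] at this
    omega
  have hvanish := sum_coeff_mul_coeff_eq_zero hx hdm
  simp_rw [← add_sum_erase _ _ hjd, sum_add_distrib, hu, mul_assoc, ← mul_sum] at hvanish
  have hoff : (p : R) ^ (s + 1) ∣
      ∑ i : Fin p, ∑ l ∈ (range (d + 1)).erase j, coeff l (x i) * a i l :=
    dvd_sum fun i _ => dvd_sum fun l hl =>
      pow_succ_dvd_coeff_mul_coeff_of_ne hp (hs i) hj r.isLt (ne_of_mem_erase hl)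
  have hdiag : (p : R) ∣ ∑ i : Fin p, u i * a i j := by
    rw [← mul_dvd_mul_iff_left (pow_ne_zero s (Nat.cast_ne_zero.mpr hp.ne_zero)), ← pow_succ]
    exact (dvd_add_left hoff).mp (hvanish ▸ dvd_zero _)
  have hmod : ∀ i : Fin p, (p : R) ∣ a i j - (i : ℕ).choose r := fun i => by
    simpa [hd] using dvd_coeff_one_add_X_pow_mul_sub_choose (R := R) hp i j d le_self_add
  rw [← sub_sub_cancel (∑ i, u i * a i j) (∑ i : Fin p, u i * ((i : ℕ).choose r : R)),
    ← sum_sub_distrib]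
  exact dvd_sub hdiag (dvd_sum fun i _ => by rw [← mul_sub]; exact (hmod i).mul_left _)

theorem pow_dvd_coeff [IsDomain R] [CharZero R] (hp : p.Prime)
    (hx : X ^ (p * m) ∣ ∑ i : Fin p, (1 + X) ^ (i : ℕ) * subst' ((1 + X) ^ p - 1) (x i))
    (i : Fin p) (j : ℕ) : (p : R) ^ (m - j) ∣ coeff j (x i) := by
  have hmin : ∀ s i l, (p : R) ^ min s (m - l) ∣ coeff l (x i) := by
    intro s
    induction s with
    | zero => simp
    | succ s ih =>
      intro i l
      by_cases hl : l + s < m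
      · rw [min_eq_left (by omega)]
        exact pow_succ_dvd_coeff hp hx ih hl i
      · rw [show min (s + 1) (m - l) = min s (m - l) by omega]
        exact ih i l
  simpa using hmin m i j

end WeakEstimate

/-- **Weak Estimate** (Proposition 3.1): if `X^n f = ∑_{i<p} (1+X)^i xᵢ((1+X)^p - 1)`
in `ℤ_p[[X]]`, then `x₀ = ψ(X^n f)` lies in `(p, X)^[n/p]`. -/
theorem weak_estimate_psi (p : ℕ) [hp : Fact p.Prime] (n : ℕ) (f : PowerSeries ℤ_[p])
    (x : Fin p → PowerSeries ℤ_[p])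
    (hx : X ^ n * f =
      ∑ i : Fin p, (1 + X) ^ (i : ℕ) * PowerSeries.subst' ((1 + X) ^ p - 1) (x i)) :
    x 0 ∈ (Ideal.span {(p : PowerSeries ℤ_[p]), X}) ^ (n / p) := by
  have hdvd : X ^ (p * (n / p)) ∣ X ^ n * f :=
    (pow_dvd_pow X (Nat.mul_div_le n p)).mul_right f
  rw [← map_natCast C p]
  exact mem_span_C_X_pow_of_pow_dvd_coeff _ (WeakEstimate.pow_dvd_coeff hp.out (hx ▸ hdvd) 0)
end

section
/- Let p be a prime, n ≥ 0 and m ≥ 0 integers. Suppose x_0, x_1, ..., x_{p-1} ∈ ℤ_p[[X]] satisfy X^n · (1+X)^m = Σ_{i=0}^{p-1} (1+X)^i · x_i((1+X)^p - 1). Then for every j ≥ 0, the coefficient of X^j in x_0 equals the sum over all integers k with 0 ≤ k ≤ n and k ≡ -m (mod p) of (-1)^(n-k) · C(n,k) · C((k+m)/p, j) (viewed in ℤ_p). -/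
/-!
Writing `X = (1 + X) - 1` gives `X^n (1+X)^m = ∑ₖ (-1)^(n-k) C(n,k) (1+X)^(k+m)`, and
`(1+X)^a = (1+X)^(a % p) φ((1+X)^(a / p))` with `φ f = f((1+X)^p - 1)`. This exhibits an explicit
solution `y` of `X^n (1+X)^m = ∑ᵢ (1+X)^i φ(yᵢ)`, and `y₀` visibly has the claimed coefficients.
So it suffices that `(zᵢ) ↦ ∑ᵢ (1+X)^i φ(zᵢ)` is injective on `ℤ_[p]⟦X⟧^p`. Modulo `p`, `φ` is
`f ↦ f(X^p)`, and the coefficients of `X^(pe+t)`, `t < p`, form a unitriangular system in the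
`zᵢ`; hence every element of the kernel is divisible by `p`, and, dividing by `p` and repeating,
by every power of `p`, so it vanishes.
-/

open PowerSeries

namespace PowerSeries

variable {R S : Type*} [CommRing R] [CommRing S]

theorem subst'_eq_subst {g : R⟦X⟧} (hg : constantCoeff g = 0) (f : R⟦X⟧) :
    subst' g f = f.subst g := by
  ext d
  rw [subst', coeff_mk, coeff_subst' (.of_constantCoeff_zero' hg),
    finsum_eq_sum_of_support_subset (s := Finset.range (d + 1))]
  · simp only [smul_eq_mul]
  · intro n hn
    by_contra hnd
    have hdn : (d : ℕ∞) < n := by simpa using hnd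
    exact hn <| by
      simp only [smul_eq_mul, coeff_of_lt_order d
        (hdn.trans_le (le_order_pow_of_constantCoeff_eq_zero n hg)), mul_zero]

theorem X_pow_mul_one_add_X_pow (n m : ℕ) :
    (X ^ n * (1 + X) ^ m : R⟦X⟧) =
      ∑ k ∈ Finset.range (n + 1), ((-1) ^ (n - k) * n.choose k : ℤ) • (1 + X) ^ (k + m) := by
  rw [show (X : R⟦X⟧) = (1 + X) + -1 by ring, add_pow, Finset.sum_mul]
  refine Finset.sum_congr rfl fun k _ => ?_
  rw [zsmul_eq_mul]
  push_cast
  ring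

theorem hasSubst_one_add_X_pow_sub_one (p : ℕ) : HasSubst ((1 + X) ^ p - 1 : R⟦X⟧) :=
  .of_constantCoeff_zero' (by simp)

/-- The `φ` of `(φ, Γ)`-module theory, with `X` in the role of `π = [ε] - 1`. -/
noncomputable def frobeniusLift (p : ℕ) : R⟦X⟧ →ₐ[R] R⟦X⟧ :=
  substAlgHom (hasSubst_one_add_X_pow_sub_one p)

theorem frobeniusLift_apply (p : ℕ) (f : R⟦X⟧) :
    frobeniusLift p f = f.subst ((1 + X) ^ p - 1) := by
  rw [frobeniusLift, coe_substAlgHom]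

theorem subst'_eq_frobeniusLift (p : ℕ) (f : R⟦X⟧) :
    subst' ((1 + X) ^ p - 1) f = frobeniusLift p f := by
  rw [subst'_eq_subst (by simp), frobeniusLift_apply]

theorem frobeniusLift_one_add_X_pow (p a : ℕ) :
    frobeniusLift p ((1 + X) ^ a : R⟦X⟧) = (1 + X) ^ (p * a) := by
  simp [frobeniusLift, substAlgHom_X, pow_mul]

theorem map_frobeniusLift (φ : R →+* S) (p : ℕ) (f : R⟦X⟧) :
    map φ (frobeniusLift p f) = frobeniusLift p (map φ f) := by
  have hY : map φ ((1 + X) ^ p - 1 : R⟦X⟧) = (1 + X) ^ p - 1 := by simp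
  rw [frobeniusLift_apply, frobeniusLift_apply, ← hY]
  exact map_subst (hasSubst_one_add_X_pow_sub_one p) f

theorem frobeniusLift_eq_expand (p : ℕ) [hp : Fact p.Prime] [CharP R p] (f : R⟦X⟧) :
    frobeniusLift p f = expand p hp.out.ne_zero f := by
  have : CharP R⟦X⟧ p := charP_of_injective_ringHom C_injective p
  rw [frobeniusLift_apply, expand_apply, add_pow_char, one_pow, add_sub_cancel_left]

/-- Over `ℤ_[p]` this is a bijection, and `ψ f` is the `0`-th component of the preimage
of `f`. -/
noncomputable def frobeniusExpansion (p : ℕ) : (Fin p → R⟦X⟧) →ₗ[R] R⟦X⟧ :=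
  ∑ i : Fin p, LinearMap.mulLeft R ((1 + X) ^ (i : ℕ)) ∘ₗ (frobeniusLift p).toLinearMap ∘ₗ
    LinearMap.proj i

theorem frobeniusExpansion_apply (p : ℕ) (z : Fin p → R⟦X⟧) :
    frobeniusExpansion p z = ∑ i : Fin p, (1 + X) ^ (i : ℕ) * frobeniusLift p (z i) := by
  simp [frobeniusExpansion]

theorem frobeniusExpansion_single_one_add_X_pow (p : ℕ) [NeZero p] (a : ℕ) :
    frobeniusExpansion p (Pi.single (Fin.ofNat p a) ((1 + X) ^ (a / p))) =
      ((1 + X) ^ a : R⟦X⟧) := by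
  rw [frobeniusExpansion_apply, Finset.sum_eq_single (Fin.ofNat p a)
    (fun i _ hi => by rw [Pi.single_eq_of_ne hi, map_zero, mul_zero]) (by simp),
    Pi.single_eq_same, frobeniusLift_one_add_X_pow, ← pow_add, Fin.val_ofNat, Nat.mod_add_div]

theorem map_frobeniusExpansion (φ : R →+* S) (p : ℕ) (z : Fin p → R⟦X⟧) :
    map φ (frobeniusExpansion p z) = frobeniusExpansion p (fun i => map φ (z i)) := by
  simp [frobeniusExpansion_apply, map_frobeniusLift]

theorem coeff_X_pow_mul_expand {p s t : ℕ} (hp : p ≠ 0) (hs : s < p) (ht : t < p) (e : ℕ)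
    (f : R⟦X⟧) :
    coeff (p * e + t) (X ^ s * expand p hp f) = if s = t then coeff e f else 0 := by
  rw [coeff_X_pow_mul']
  split_ifs with hle hst hst
  · rw [hst, Nat.add_sub_cancel, coeff_expand_mul]
  · rw [coeff_expand_of_not_dvd]
    rintro ⟨c, hc⟩
    have := congrArg (· % p) (show p * e + t = p * c + s by omega)
    simp only [mul_comm p, Nat.mul_add_mod_of_lt ht, Nat.mul_add_mod_of_lt hs] at this
    exact hst this.symm
  · omega
  · rfl

theorem coeff_one_add_X_pow_mul_expand {p i t : ℕ} (hp : p ≠ 0) (hi : i < p) (ht : t < p)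
    (e : ℕ) (f : R⟦X⟧) :
    coeff (p * e + t) ((1 + X) ^ i * expand p hp f) = i.choose t * coeff e f := by
  have hterm : ∀ s ∈ Finset.range (i + 1),
      coeff (p * e + t) (X ^ s * 1 ^ (i - s) * (i.choose s : R⟦X⟧) * expand p hp f) =
        if s = t then (i.choose s : R) * coeff e f else 0 := by
    intro s hs
    rw [one_pow, mul_one, mul_comm (X ^ s), mul_assoc, ← map_natCast C, coeff_C_mul,
      coeff_X_pow_mul_expand hp (by grind) ht, mul_ite, mul_zero]
  rw [add_comm (1 : R⟦X⟧), add_pow, Finset.sum_mul, map_sum, Finset.sum_congr rfl hterm,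
    Finset.sum_ite_eq']
  split_ifs with hti
  · rfl
  · rw [Nat.choose_eq_zero_of_lt (by simpa using hti), Nat.cast_zero, zero_mul]

/-- The coefficients of `X^(p e + t)` form the unitriangular system `∑ᵢ C(i, t) zᵢₑ = 0`. -/
theorem eq_zero_of_sum_one_add_X_pow_mul_expand_eq_zero {p : ℕ} (hp : p ≠ 0)
    (z : Fin p → R⟦X⟧) (h : ∑ i : Fin p, (1 + X) ^ (i : ℕ) * expand p hp (z i) = 0) :
    z = 0 := by
  funext i
  ext e
  let M : Matrix (Fin p) (Fin p) R := Matrix.of fun t i => ((i : ℕ).choose t : R)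
  have hM : M.det = 1 := by
    rw [Matrix.det_of_isUpperTriangular]
    · simp [M]
    · intro t i hit
      simp [M, Nat.choose_eq_zero_of_lt (show (i : ℕ) < t from hit)]
  have hMv : M.mulVec (fun i => coeff e (z i)) = 0 := by
    funext t
    have := congrArg (coeff (p * e + t)) h
    simpa [M, Matrix.mulVec, dotProduct, coeff_one_add_X_pow_mul_expand hp _ t.isLt] using this
  have := Matrix.mulVec_injective_of_det_mem_nonZeroDivisors (hM ▸ one_mem _)
    (hMv.trans (Matrix.mulVec_zero M).symm)
  simpa using congrFun this i

theorem frobeniusExpansion_injective_of_charP (p : ℕ) [hp : Fact p.Prime] [CharP R p] :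
    Function.Injective (frobeniusExpansion (R := R) p) := by
  refine (injective_iff_map_eq_zero _).mpr fun z hz => ?_
  simp only [frobeniusExpansion_apply, frobeniusLift_eq_expand] at hz
  exact eq_zero_of_sum_one_add_X_pow_mul_expand_eq_zero _ z hz

theorem exists_eq_smul_of_dvd_coeff {ι : Type*} {a : R} {z : ι → R⟦X⟧}
    (h : ∀ i n, a ∣ coeff n (z i)) : ∃ w, z = a • w := by
  choose w hw using h
  exact ⟨fun i => mk (w i), funext fun i => PowerSeries.ext fun n => by simp [hw]⟩

end PowerSeries

namespace PadicInt

variable {p : ℕ} [hp : Fact p.Prime]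

theorem eq_zero_of_forall_pow_dvd {a : ℤ_[p]} (h : ∀ c : ℕ, (p : ℤ_[p]) ^ c ∣ a) : a = 0 :=
  IsHausdorff.haus (I := IsLocalRing.maximalIdeal ℤ_[p]) inferInstance a fun c => by
    simpa [SModEq.zero, maximalIdeal_eq_span_p, Ideal.span_singleton_pow,
      Ideal.mem_span_singleton] using h c

theorem p_dvd_coeff_of_frobeniusExpansion_eq_zero {z : Fin p → ℤ_[p]⟦X⟧}
    (hz : frobeniusExpansion p z = 0) (i : Fin p) (n : ℕ) : (p : ℤ_[p]) ∣ coeff n (z i) := by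
  have hmod : (fun i => map toZMod (z i)) = 0 :=
    frobeniusExpansion_injective_of_charP p <| by
      rw [← map_frobeniusExpansion, hz, map_zero, map_zero]
  have : toZMod (coeff n (z i)) = 0 := by simpa using congrArg (coeff n) (congrFun hmod i)
  rwa [← RingHom.mem_ker, ker_toZMod, maximalIdeal_eq_span_p, Ideal.mem_span_singleton] at this

theorem pow_dvd_coeff_of_frobeniusExpansion_eq_zero (c : ℕ) {z : Fin p → ℤ_[p]⟦X⟧}
    (hz : frobeniusExpansion p z = 0) (i : Fin p) (n : ℕ) :
    (p : ℤ_[p]) ^ c ∣ coeff n (z i) := by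
  induction c generalizing z with
  | zero => simp
  | succ c ih =>
    obtain ⟨w, rfl⟩ := exists_eq_smul_of_dvd_coeff (p_dvd_coeff_of_frobeniusExpansion_eq_zero hz)
    have hw : frobeniusExpansion p w = 0 := by
      rw [map_smul, smul_eq_C_mul] at hz
      exact (mul_eq_zero.mp hz).resolve_left
        ((map_ne_zero_iff C C_injective).mpr (Nat.cast_ne_zero.mpr hp.out.ne_zero))
    simpa [pow_succ'] using mul_dvd_mul_left (p : ℤ_[p]) (ih hw)

theorem frobeniusExpansion_injective : Function.Injective (frobeniusExpansion (R := ℤ_[p]) p) :=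
  (injective_iff_map_eq_zero _).mpr fun _ hz => funext fun i => PowerSeries.ext fun n =>
    eq_zero_of_forall_pow_dvd fun c => pow_dvd_coeff_of_frobeniusExpansion_eq_zero c hz i n

end PadicInt

theorem Fin.ofNat_add_eq_zero_iff_modEq {p : ℕ} [NeZero p] (k m : ℕ) :
    Fin.ofNat p (k + m) = 0 ↔ (k : ℤ) ≡ -(m : ℤ) [ZMOD (p : ℤ)] := by
  rw [Fin.ext_iff, Fin.val_ofNat, Fin.val_zero, ← Nat.dvd_iff_mod_eq_zero, Int.modEq_iff_dvd,
    show -(m : ℤ) - k = -((k + m : ℕ) : ℤ) by push_cast; ring, dvd_neg, Int.natCast_dvd_natCast]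

/-- **Lemma 3.2** (with `r = -m`): if `X^n (1+X)^m = ∑_{i<p} (1+X)^i xᵢ((1+X)^p - 1)`
in `ℤ_p[[X]]`, then the coefficient of `X^j` in `x₀ = ψ(X^n (1+X)^m)` equals
`∑_{k ≡ -m mod p} (-1)^(n-k) C(n,k) C((k+m)/p, j)`. -/
theorem psi_coeff_formula (p : ℕ) [hp : Fact p.Prime] (n m : ℕ)
    (x : Fin p → PowerSeries ℤ_[p])
    (hx : X ^ n * (1 + X) ^ m =
      ∑ i : Fin p, (1 + X) ^ (i : ℕ) * PowerSeries.subst' ((1 + X) ^ p - 1) (x i))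
    (j : ℕ) :
    coeff j (x 0) =
      ((∑ k ∈ (Finset.range (n + 1)).filter (fun k : ℕ => (k : ℤ) ≡ -(m : ℤ) [ZMOD (p : ℤ)]),
        (-1) ^ (n - k) * (n.choose k : ℤ) *
          Ring.choose (((k : ℤ) + m) / (p : ℤ)) j : ℤ) : ℤ_[p]) := by
  let y : Fin p → ℤ_[p]⟦X⟧ := ∑ k ∈ Finset.range (n + 1),
    ((-1) ^ (n - k) * n.choose k : ℤ) • Pi.single (Fin.ofNat p (k + m)) ((1 + X) ^ ((k + m) / p))
  have hy : frobeniusExpansion p y = X ^ n * (1 + X) ^ m := by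
    simp only [y, map_sum, map_zsmul, frobeniusExpansion_single_one_add_X_pow,
      X_pow_mul_one_add_X_pow]
  have hxy : x = y := PadicInt.frobeniusExpansion_injective <| by
    simp_rw [hy, hx, frobeniusExpansion_apply, subst'_eq_frobeniusLift]
  have hcoeff (k : ℕ) : coeff j ((1 + X) ^ ((k + m) / p) : ℤ_[p]⟦X⟧) =
      Ring.choose (((k : ℤ) + m) / p) j • (1 : ℤ_[p]) := by
    rw [← binomialSeries_nat (R := ℤ), binomialSeries_coeff, Int.natCast_div, Nat.cast_add]
  rw [hxy, Finset.filter_congr fun k _ => (Fin.ofNat_add_eq_zero_iff_modEq k m).symm,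
    Finset.sum_filter]
  simp only [y, Finset.sum_apply, Pi.smul_apply, map_sum, map_zsmul]
  push_cast
  refine Finset.sum_congr rfl fun k _ => ?_
  split_ifs with hk
  · rw [hk, Pi.single_eq_same, hcoeff, zsmul_eq_mul, zsmul_eq_mul, mul_one]
    push_cast
    rfl
  · rw [Pi.single_eq_of_ne' hk, map_zero, smul_zero]
end
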